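/- arXiv:1906.01951 — 6 statements merged into one kernel-verified Lean document; each statement's English description precedes it below -/
import Mathlib

section
/- Let t_{n,k} = Σ_{j=1}^{k} binomial(k,j) · ρ_{n,j-1}. Then for all n ≥ 1 and k ≥ 1 one has t_{n,k} = t_{n,1} + Σ_{i=1}^{n} t_{i,k-1}, where t_{n,0} = 0. -/
/-- `ρ_{n,k} = Σ_{j=k}^{n-1} (-1)^{n-1-j} · binomial(j,k)` (empty sum is 0). -/
def rho (n k : ℕ) : ℤ :=
  ∑ j ∈ Finset.Ico k n, (-1 : ℤ) ^ (n - 1 - j) * (j.choose k : ℤ)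

/-- `t_{n,k} = Σ_{j=1}^{k} binomial(k,j) · ρ_{n,j-1}`.  Note `t_{n,0} = 0` (empty sum). -/
def tt (n k : ℕ) : ℤ :=
  ∑ j ∈ Finset.Icc 1 k, (k.choose j : ℤ) * rho n (j - 1)

lemma pascal_rho (n m : ℕ) : rho (n+1) (m+1) = rho n m + rho n (m+1) := by
  unfold rho
  rw [show Finset.Ico (m+1) (n+1) = (Finset.Ico m n).map (addRightEmbedding 1) by
        rw [Finset.map_add_right_Ico],
      Finset.sum_map]
  have key : ∀ j ∈ Finset.Ico m n,
      (-1:ℤ)^(n+1-1-(addRightEmbedding 1 j)) * (((addRightEmbedding 1 j).choose (m+1) : ℕ) : ℤ)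
      = (-1:ℤ)^(n-1-j) * (j.choose m : ℤ) + (-1:ℤ)^(n-1-j) * (j.choose (m+1) : ℤ) := by
    intro j hj
    simp only [addRightEmbedding_apply]
    rw [show n+1-1-(j+1) = n-1-j by omega, Nat.choose_succ_succ]
    push_cast; ring
  rw [Finset.sum_congr rfl key, Finset.sum_add_distrib]
  congr 1
  refine (Finset.sum_subset (Finset.Ico_subset_Ico (Nat.le_succ m) le_rfl) ?_).symm
  intro x hx hx2
  have hxm : x = m := by simp only [Finset.mem_Ico] at hx hx2; omega
  subst hxm
  simp [Nat.choose_succ_self]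

lemma sum_rho (n m : ℕ) : ∑ i ∈ Finset.Icc 1 n, rho i m = rho n m + rho n (m+1) := by
  induction n with
  | zero => simp [rho]
  | succ n ih =>
    rw [Finset.sum_Icc_succ_top (Nat.succ_le_succ (Nat.zero_le n)), ih, pascal_rho]
    ring

theorem stmt3 (n k : ℕ) (hn : 1 ≤ n) (hk : 1 ≤ k) :
    tt n k = tt n 1 + ∑ i ∈ Finset.Icc 1 n, tt i (k - 1) := by
  obtain ⟨K, rfl⟩ := Nat.exists_eq_add_of_le hk
  have h1 : (1 + K) - 1 = K := by omega
  rw [h1]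
  have hconv : ∀ (N : ℕ) (f : ℕ → ℤ),
      ∑ j ∈ Finset.Icc 1 N, f j = ∑ m ∈ Finset.range N, f (1 + m) := by
    intro N f
    rw [← Finset.Ico_add_one_right_eq_Icc, Finset.sum_Ico_eq_sum_range]
    simp
  have htt1 : tt n 1 = rho n 0 := by simp [tt]
  -- RHS sum computation
  have hRHS : ∑ i ∈ Finset.Icc 1 n, tt i K
      = ∑ m ∈ Finset.range K, (K.choose (m+1) : ℤ) * (rho n m + rho n (m+1)) := by
    unfold tt
    rw [Finset.sum_comm]
    rw [hconv K fun j => ∑ i ∈ Finset.Icc 1 n, (K.choose j : ℤ) * rho i (j - 1)]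
    apply Finset.sum_congr rfl
    intro m _
    rw [← Finset.mul_sum, show (1 + m) - 1 = m by omega, sum_rho, add_comm 1 m]
  -- LHS computation
  have hLHS : tt n (1 + K)
      = rho n 0 + ∑ m ∈ Finset.range K, (K.choose (m+1) : ℤ) * (rho n m + rho n (m+1)) := by
    unfold tt
    rw [hconv (1 + K) fun j => ((1 + K).choose j : ℤ) * rho n (j - 1)]
    have step : ∀ m ∈ Finset.range (1 + K),
        (((1 + K).choose (1 + m) : ℕ) : ℤ) * rho n ((1 + m) - 1)
        = (K.choose m : ℤ) * rho n m + (K.choose (m+1) : ℤ) * rho n m := by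
      intro m _
      rw [show (1 + m) - 1 = m by omega, show 1 + K = K + 1 by omega,
          show 1 + m = m + 1 by omega, Nat.choose_succ_succ]
      push_cast; ring
    rw [Finset.sum_congr rfl step, Finset.sum_add_distrib,
        show 1 + K = K + 1 by omega, Finset.sum_range_succ',
        Finset.sum_range_succ]
    simp only [Nat.choose_zero_right, Nat.cast_one, one_mul, Nat.choose_succ_self,
      Nat.cast_zero, zero_mul, add_zero]
    have comb : ∑ m ∈ Finset.range K, (K.choose (m+1) : ℤ) * rho n (m+1)
        + ∑ m ∈ Finset.range K, (K.choose (m+1) : ℤ) * rho n m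
        = ∑ m ∈ Finset.range K, (K.choose (m+1) : ℤ) * (rho n m + rho n (m+1)) := by
      rw [← Finset.sum_add_distrib]
      exact Finset.sum_congr rfl fun m _ => by ring
    linarith [comb]
  rw [hLHS, hRHS, htt1]
end

section
/- Let Λ be a commutative ring, P the poset of simplices (including the empty simplex) of a finite simplicial complex Σ, and M = (M_*, M^*) a Mackey ΛP-module, i.e., a covariant functor M_* and contravariant functor M^* from P to Λ-modules agreeing on objects such that for σ₁, σ₂ ≤ τ one has M^*(σ₂ ≤ τ) ∘ M_*(σ₁ ≤ τ) = M_*(σ₁∩σ₂ ≤ σ₂) ∘ M^*(σ₁∩σ₂ ≤ σ₁). Fix τ ∈ P and d ≥ −1, and define s^d_τ : M_*(τ) → M_*(τ) by s^d_τ = id − Σ_{μ < τ, dim μ = d} M_*(μ ≤ τ) ∘ M^*(μ ≤ τ). Let L^d_τ M_* ⊆ M_*(τ) be the sum of the images of M_*(σ ≤ τ) over all σ < τ with dim σ ≤ d. Then s^d_τ(L^d_τ M_*) ⊆ L^{d−1}_τ M_*. -/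
open Finset

/-- Let `P` be the poset of simplices (including the empty simplex, of dimension `−1`) of a
finite simplicial complex, modelled as a subset-closed collection `K` of finite subsets of a
finite vertex set `V`, and let `(M, cov, con)` be a Mackey `ΛP`-module: a covariant functor
`cov` and contravariant functor `con` agreeing on objects and satisfying the double coset
formula.  Fix `τ ∈ P` and `d ≥ −1` and let `s^d_τ = id − Σ_{μ < τ, dim μ = d} cov ∘ con`
(where `dim μ = d` means `|μ| = d + 1`), and let `L^e_τ ⊆ M τ` be the sum of the images of
`cov (σ ≤ τ)` over all `σ < τ` with `dim σ ≤ e` (i.e. `|σ| ≤ e + 1`).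
Then `s^d_τ (L^d_τ) ⊆ L^{d−1}_τ`. -/
theorem stmt9 {Λ V : Type} [CommRing Λ] [Fintype V] [DecidableEq V]
    (K : Finset (Finset V))
    (hsub : ∀ s ∈ K, ∀ t : Finset V, t ⊆ s → t ∈ K)
    (hempty : ∅ ∈ K)
    (M : Finset V → Type) [∀ s, AddCommGroup (M s)] [∀ s, Module Λ (M s)]
    (cov : ∀ σ τ : Finset V, σ ∈ K → τ ∈ K → σ ⊆ τ → (M σ →ₗ[Λ] M τ))
    (con : ∀ σ τ : Finset V, σ ∈ K → τ ∈ K → σ ⊆ τ → (M τ →ₗ[Λ] M σ))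
    (hcov_id : ∀ σ (h : σ ∈ K), cov σ σ h h (subset_refl σ) = LinearMap.id)
    (hcov_comp : ∀ σ τ ρ (hσ : σ ∈ K) (hτ : τ ∈ K) (hρ : ρ ∈ K)
      (h1 : σ ⊆ τ) (h2 : τ ⊆ ρ),
      (cov τ ρ hτ hρ h2).comp (cov σ τ hσ hτ h1) = cov σ ρ hσ hρ (h1.trans h2))
    (hcon_id : ∀ σ (h : σ ∈ K), con σ σ h h (subset_refl σ) = LinearMap.id)
    (hcon_comp : ∀ σ τ ρ (hσ : σ ∈ K) (hτ : τ ∈ K) (hρ : ρ ∈ K)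
      (h1 : σ ⊆ τ) (h2 : τ ⊆ ρ),
      (con σ τ hσ hτ h1).comp (con τ ρ hτ hρ h2) = con σ ρ hσ hρ (h1.trans h2))
    (hmackey : ∀ σ₁ σ₂ τ (h1 : σ₁ ∈ K) (h2 : σ₂ ∈ K) (hτ : τ ∈ K)
      (hs1 : σ₁ ⊆ τ) (hs2 : σ₂ ⊆ τ),
      (con σ₂ τ h2 hτ hs2).comp (cov σ₁ τ h1 hτ hs1)
        = (cov (σ₁ ∩ σ₂) σ₂ (hsub σ₂ h2 _ inter_subset_right) h2 inter_subset_right).comp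
            (con (σ₁ ∩ σ₂) σ₁ (hsub σ₁ h1 _ inter_subset_left) h1 inter_subset_left))
    (τ : Finset V) (hτ : τ ∈ K) (d : ℤ) (hd : -1 ≤ d)
    (sd : M τ →ₗ[Λ] M τ)
    (hsd : sd = LinearMap.id - ∑ μ ∈ K.attach,
      if h : μ.1 ⊂ τ ∧ (μ.1.card : ℤ) = d + 1 then
        (cov μ.1 τ μ.2 hτ h.1.subset).comp (con μ.1 τ μ.2 hτ h.1.subset)
      else 0)
    (L : ℤ → Submodule Λ (M τ))
    (hL : ∀ e : ℤ, L e = ⨆ (μ : {s : Finset V // s ∈ K})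
      (h : μ.1 ⊂ τ ∧ (μ.1.card : ℤ) ≤ e + 1),
        LinearMap.range (cov μ.1 τ μ.2 hτ h.1.subset)) :
    ∀ x ∈ L d, sd x ∈ L (d - 1) := by

  have memL : ∀ (e : ℤ) (ρ : Finset V) (hρ : ρ ∈ K) (hsub' : ρ ⊆ τ)
      (h1 : ρ ⊂ τ) (h2 : (ρ.card : ℤ) ≤ e + 1) (z : M ρ),
      cov ρ τ hρ hτ hsub' z ∈ L e := by
    intro e ρ hρ hsub' h1 h2 z
    rw [hL]
    refine Submodule.mem_iSup_of_mem ⟨ρ, hρ⟩ ?_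
    refine Submodule.mem_iSup_of_mem ⟨h1, h2⟩ ?_
    exact ⟨z, rfl⟩
  -- the double coset formula for σ₁ = σ₂ gives `con ∘ cov = id`
  have key_id : ∀ (σ : Finset V) (hσK : σ ∈ K) (hst : σ ⊆ τ),
      (con σ τ hσK hτ hst).comp (cov σ τ hσK hτ hst) = LinearMap.id := by
    intro σ hσK hst
    rw [hmackey σ σ τ hσK hσK hτ hst hst]
    have haux : ∀ (a : Finset V) (ha : a ∈ K) (h1 : a ⊆ σ) (he : a = σ),
        (cov a σ ha hσK h1).comp (con a σ ha hσK h1) = LinearMap.id := by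
      intro a ha h1 he
      subst he
      rw [hcov_id, hcon_id]
      simp
    exact haux _ _ _ (Finset.inter_self σ)
  -- each term of the sum, for μ' ≠ σ, lands in L (d - 1)
  have claimA : ∀ (σ : Finset V) (hσK : σ ∈ K) (hσ : σ ⊂ τ) (hcard : (σ.card : ℤ) ≤ d + 1)
      (y : M σ) (μ' : {s : Finset V // s ∈ K}), μ'.1 ≠ σ →
      (if h : μ'.1 ⊂ τ ∧ (μ'.1.card : ℤ) = d + 1 then
          (cov μ'.1 τ μ'.2 hτ h.1.subset).comp (con μ'.1 τ μ'.2 hτ h.1.subset)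
        else 0) (cov σ τ hσK hτ hσ.subset y) ∈ L (d - 1) := by
    intro σ hσK hσ hcard y μ' hne
    by_cases h : μ'.1 ⊂ τ ∧ (μ'.1.card : ℤ) = d + 1
    · rw [dif_pos h]
      have hmk := LinearMap.congr_fun
        (hmackey σ μ'.1 τ hσK μ'.2 hτ hσ.subset h.1.subset) y
      simp only [LinearMap.comp_apply] at hmk ⊢
      rw [hmk]
      have hcc := LinearMap.congr_fun
        (hcov_comp (σ ∩ μ'.1) μ'.1 τ (hsub σ hσK _ inter_subset_left) μ'.2 hτ
          inter_subset_right h.1.subset)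
        (con (σ ∩ μ'.1) σ (hsub σ hσK _ inter_subset_left) hσK inter_subset_left y)
      simp only [LinearMap.comp_apply] at hcc
      rw [hcc]
      refine memL (d - 1) _ _ _ (lt_of_le_of_lt inter_subset_left hσ) ?_ _
      -- card bound : (σ ∩ μ').card ≤ d
      have hle : (σ ∩ μ'.1).card ≤ σ.card := Finset.card_le_card inter_subset_left
      by_contra hgt
      push_neg at hgt
      have h1 : ((σ ∩ μ'.1).card : ℤ) = d + 1 := by
        have : ((σ ∩ μ'.1).card : ℤ) ≤ (σ.card : ℤ) := by exact_mod_cast hle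
        omega
      have h2 : (σ.card : ℤ) = d + 1 := by
        have : ((σ ∩ μ'.1).card : ℤ) ≤ (σ.card : ℤ) := by exact_mod_cast hle
        omega
      have hcards : (σ ∩ μ'.1).card = σ.card := by exact_mod_cast h1.trans h2.symm
      have heq1 : σ ∩ μ'.1 = σ :=
        Finset.eq_of_subset_of_card_le inter_subset_left (le_of_eq hcards.symm)
      have hsubμ : σ ⊆ μ'.1 := by
        rw [← heq1]; exact inter_subset_right
      have hcards2 : μ'.1.card ≤ σ.card := by
        have : (μ'.1.card : ℤ) = (σ.card : ℤ) := by omega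
        exact_mod_cast le_of_eq this
      exact hne (Finset.eq_of_subset_of_card_le hsubμ hcards2).symm
    · rw [dif_neg h]
      simp
  -- the main computation for a single generator
  have key : ∀ (σ : Finset V) (hσK : σ ∈ K) (hσ : σ ⊂ τ) (hcard : (σ.card : ℤ) ≤ d + 1)
      (y : M σ), sd (cov σ τ hσK hτ hσ.subset y) ∈ L (d - 1) := by
    intro σ hσK hσ hcard y
    set v := cov σ τ hσK hτ hσ.subset y with hv
    have hsdv : sd v = v - ∑ μ' ∈ K.attach,
        (if h : μ'.1 ⊂ τ ∧ (μ'.1.card : ℤ) = d + 1 then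
            (cov μ'.1 τ μ'.2 hτ h.1.subset).comp (con μ'.1 τ μ'.2 hτ h.1.subset)
          else 0) v := by
      rw [hsd]
      simp [LinearMap.sub_apply, LinearMap.sum_apply]
    rw [hsdv]
    by_cases hc : (σ.card : ℤ) = d + 1
    · -- the term μ' = σ equals v and cancels
      have hmem : (⟨σ, hσK⟩ : {s : Finset V // s ∈ K}) ∈ K.attach := Finset.mem_attach _ _
      rw [← Finset.sum_erase_add _ _ hmem]
      have hterm : (if h : σ ⊂ τ ∧ ((σ.card : ℤ) = d + 1) then
            (cov σ τ hσK hτ h.1.subset).comp (con σ τ hσK hτ h.1.subset)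
          else 0) v = v := by
        rw [dif_pos ⟨hσ, hc⟩]
        have := LinearMap.congr_fun (key_id σ hσK hσ.subset) y
        simp only [LinearMap.comp_apply, LinearMap.id_apply] at this ⊢
        rw [hv, this]
      rw [hterm]
      have : v - (∑ μ' ∈ (K.attach).erase ⟨σ, hσK⟩,
          (if h : μ'.1 ⊂ τ ∧ (μ'.1.card : ℤ) = d + 1 then
              (cov μ'.1 τ μ'.2 hτ h.1.subset).comp (con μ'.1 τ μ'.2 hτ h.1.subset)
            else 0) v + v)
          = - ∑ μ' ∈ (K.attach).erase ⟨σ, hσK⟩,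
          (if h : μ'.1 ⊂ τ ∧ (μ'.1.card : ℤ) = d + 1 then
              (cov μ'.1 τ μ'.2 hτ h.1.subset).comp (con μ'.1 τ μ'.2 hτ h.1.subset)
            else 0) v := by
        abel
      rw [this]
      refine neg_mem (Submodule.sum_mem _ ?_)
      intro μ' hμ'
      have hne : μ'.1 ≠ σ := by
        intro heq
        exact (Finset.mem_erase.mp hμ').1 (Subtype.ext heq)
      exact claimA σ hσK hσ hcard y μ' hne
    · -- |σ| ≤ d, so v ∈ L (d-1) and every term lies in L (d-1)
      have hvmem : v ∈ L (d - 1) := memL (d - 1) σ hσK hσ.subset hσ (by omega) y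
      refine sub_mem hvmem (Submodule.sum_mem _ ?_)
      intro μ' _
      by_cases hne : μ'.1 = σ
      · have : ¬ (μ'.1 ⊂ τ ∧ (μ'.1.card : ℤ) = d + 1) := by
          rw [hne]; intro hcontra; exact hc hcontra.2
        rw [dif_neg this]
        simp
      · exact claimA σ hσK hσ hcard y μ' hne
  -- conclude by the iSup description of L d
  intro x hx
  suffices hmap : Submodule.map sd (L d) ≤ L (d - 1) from
    hmap (Submodule.mem_map_of_mem hx)
  rw [hL d, Submodule.map_iSup]
  refine iSup_le fun μ => ?_
  rw [Submodule.map_iSup]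
  refine iSup_le fun h => ?_
  rintro _ ⟨_, ⟨y, rfl⟩, rfl⟩
  exact key μ.1 μ.2 h.1 h.2 y
end

section
/- Let Λ be a commutative ring, P the poset of simplices of a finite simplicial complex (including the empty simplex), and M = (M_*, M^*) a Mackey ΛP-module. Fix τ ∈ P, let p_τ : M_*(τ) → S_τ M_* be the projection onto the quotient of M_*(τ) by the sum of the images of M_*(σ ≤ τ) for all σ < τ, and define s_τ : M_*(τ) → M_*(τ) as the composite s^{−1}_τ ∘ s^0_τ ∘ ⋯ ∘ s^{dim(τ)−1}_τ, where s^d_τ = id − Σ_{μ < τ, dim μ = d} M_*(μ ≤ τ) ∘ M^*(μ ≤ τ). Then s_τ vanishes on L_τ M_* = Σ_{σ < τ} im(M_*(σ ≤ τ)), and the induced map s̄_τ : S_τ M_* → M_*(τ) satisfies p_τ ∘ s̄_τ = id. In particular, S_τ M_* is a direct summand of M_*(τ). -/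
open Finset

/-- Let `P` be the simplex poset (empty simplex included) of a finite simplicial complex,
modelled as a subset-closed collection `K` of finite subsets of a finite vertex set `V`, and
let `(M, cov, con)` be a Mackey `ΛP`-module.  Fix `τ ∈ P`, let
`L_τ = Σ_{σ < τ} im(cov (σ ≤ τ)) ⊆ M τ` with projection `p_τ : M τ → S_τ M = M τ / L_τ`, and
let `s_τ = s^{−1}_τ ∘ s^0_τ ∘ ⋯ ∘ s^{dim τ − 1}_τ` where
`s^d_τ = id − Σ_{μ < τ, dim μ = d} cov ∘ con` (here `dim μ = d` iff `|μ| = d+1`).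
Then `s_τ` vanishes on `L_τ`, and the induced map `s̄_τ : S_τ M → M τ` satisfies
`p_τ ∘ s̄_τ = id`; in particular `S_τ M` is a direct summand of `M τ`. -/
theorem stmt10 {Λ V : Type} [CommRing Λ] [Fintype V] [DecidableEq V]
    (K : Finset (Finset V))
    (hsub : ∀ s ∈ K, ∀ t : Finset V, t ⊆ s → t ∈ K)
    (hempty : ∅ ∈ K)
    (M : Finset V → Type) [∀ s, AddCommGroup (M s)] [∀ s, Module Λ (M s)]
    (cov : ∀ σ τ : Finset V, σ ∈ K → τ ∈ K → σ ⊆ τ → (M σ →ₗ[Λ] M τ))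
    (con : ∀ σ τ : Finset V, σ ∈ K → τ ∈ K → σ ⊆ τ → (M τ →ₗ[Λ] M σ))
    (hcov_id : ∀ σ (h : σ ∈ K), cov σ σ h h (subset_refl σ) = LinearMap.id)
    (hcov_comp : ∀ σ τ ρ (hσ : σ ∈ K) (hτ : τ ∈ K) (hρ : ρ ∈ K)
      (h1 : σ ⊆ τ) (h2 : τ ⊆ ρ),
      (cov τ ρ hτ hρ h2).comp (cov σ τ hσ hτ h1) = cov σ ρ hσ hρ (h1.trans h2))
    (hcon_id : ∀ σ (h : σ ∈ K), con σ σ h h (subset_refl σ) = LinearMap.id)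
    (hcon_comp : ∀ σ τ ρ (hσ : σ ∈ K) (hτ : τ ∈ K) (hρ : ρ ∈ K)
      (h1 : σ ⊆ τ) (h2 : τ ⊆ ρ),
      (con σ τ hσ hτ h1).comp (con τ ρ hτ hρ h2) = con σ ρ hσ hρ (h1.trans h2))
    (hmackey : ∀ σ₁ σ₂ τ (h1 : σ₁ ∈ K) (h2 : σ₂ ∈ K) (hτ : τ ∈ K)
      (hs1 : σ₁ ⊆ τ) (hs2 : σ₂ ⊆ τ),
      (con σ₂ τ h2 hτ hs2).comp (cov σ₁ τ h1 hτ hs1)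
        = (cov (σ₁ ∩ σ₂) σ₂ (hsub σ₂ h2 _ inter_subset_right) h2 inter_subset_right).comp
            (con (σ₁ ∩ σ₂) σ₁ (hsub σ₁ h1 _ inter_subset_left) h1 inter_subset_left))
    (τ : Finset V) (hτ : τ ∈ K)
    -- the maps `s^d_τ` for `d = i − 1`, `i = 0, 1, …, |τ| − 1`:
    (sd : ℕ → (M τ →ₗ[Λ] M τ))
    (hsd : ∀ i : ℕ, sd i = LinearMap.id - ∑ μ ∈ K.attach,
      if h : μ.1 ⊂ τ ∧ μ.1.card = i then
        (cov μ.1 τ μ.2 hτ h.1.subset).comp (con μ.1 τ μ.2 hτ h.1.subset)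
      else 0)
    -- the composite `s_τ = s^{−1}_τ ∘ s^0_τ ∘ ⋯ ∘ s^{dim τ − 1}_τ`:
    (stau : M τ →ₗ[Λ] M τ)
    (hstau : stau = (List.range τ.card).foldr (fun i f => (sd i).comp f) LinearMap.id)
    (Ltau : Submodule Λ (M τ))
    (hLtau : Ltau = ⨆ (μ : {s : Finset V // s ∈ K}) (h : μ.1 ⊂ τ),
      LinearMap.range (cov μ.1 τ μ.2 hτ h.subset)) :
    (∀ x ∈ Ltau, stau x = 0) ∧
    ∃ sbar : (M τ ⧸ Ltau) →ₗ[Λ] M τ,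
      (∀ x : M τ, sbar (Submodule.Quotient.mk x) = stau x) ∧
      Ltau.mkQ.comp sbar = LinearMap.id := by
  classical
  -- the filtration `L j` = span of images of faces of cardinality `< j`
  let L : ℕ → Submodule Λ (M τ) := fun j =>
    ⨆ (μ : {s : Finset V // s ∈ K}) (h : μ.1 ⊂ τ) (_ : μ.1.card < j),
      LinearMap.range (cov μ.1 τ μ.2 hτ h.subset)
  have hL_mem : ∀ (j : ℕ) (ρ : Finset V) (hρ : ρ ∈ K) (h1 : ρ ⊂ τ) (h2 : ρ.card < j)
      (z : M ρ), cov ρ τ hρ hτ h1.subset z ∈ L j := by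
    intro j ρ hρ h1 h2 z
    refine Submodule.mem_iSup_of_mem ⟨ρ, hρ⟩ ?_
    refine Submodule.mem_iSup_of_mem h1 ?_
    refine Submodule.mem_iSup_of_mem h2 ?_
    exact ⟨z, rfl⟩
  have hL0 : ∀ x ∈ L 0, x = 0 := by
    intro x hx
    have : L 0 ≤ ⊥ := by
      refine iSup_le fun μ => iSup_le fun h1 => iSup_le fun h2 => ?_
      exact absurd h2 (Nat.not_lt_zero _)
    simpa using this hx
  have hLtau_le : ∀ x ∈ Ltau, x ∈ L τ.card := by
    intro x hx
    rw [hLtau] at hx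
    have : (⨆ (μ : {s : Finset V // s ∈ K}) (h : μ.1 ⊂ τ),
        LinearMap.range (cov μ.1 τ μ.2 hτ h.subset)) ≤ L τ.card := by
      refine iSup_le fun μ => iSup_le fun h1 => ?_
      rintro y ⟨z, rfl⟩
      exact hL_mem τ.card μ.1 μ.2 h1 (Finset.card_lt_card h1) z
    exact this hx
  -- `cov ∘ con` is the identity along an equality of faces
  have hcc : ∀ (ρ σ : Finset V) (hρ : ρ ∈ K) (hσ : σ ∈ K) (heq : ρ = σ)
      (hρτ : ρ ⊆ τ) (hστ : σ ⊆ τ) (hρσ : ρ ⊆ σ) (y : M σ),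
      cov ρ τ hρ hτ hρτ (con ρ σ hρ hσ hρσ y) = cov σ τ hσ hτ hστ y := by
    intro ρ σ hρ hσ heq
    subst heq
    intro hρτ hστ hρσ y
    have h1 : con ρ ρ hρ hσ hρσ y = y := LinearMap.congr_fun (hcon_id ρ hρ) y
    rw [h1]
  -- the Mackey reduction of a single summand
  have hred : ∀ (σ μ : Finset V) (hσ : σ ∈ K) (hμ : μ ∈ K) (hστ : σ ⊆ τ) (hμτ : μ ⊆ τ)
      (y : M σ),
      cov μ τ hμ hτ hμτ (con μ τ hμ hτ hμτ (cov σ τ hσ hτ hστ y))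
        = cov (σ ∩ μ) τ (hsub σ hσ _ inter_subset_left) hτ
            (inter_subset_left.trans hστ)
            (con (σ ∩ μ) σ (hsub σ hσ _ inter_subset_left) hσ inter_subset_left y) := by
    intro σ μ hσ hμ hστ hμτ y
    have m' : con μ τ hμ hτ hμτ (cov σ τ hσ hτ hστ y)
        = cov (σ ∩ μ) μ (hsub μ hμ _ inter_subset_right) hμ inter_subset_right
            (con (σ ∩ μ) σ (hsub σ hσ _ inter_subset_left) hσ inter_subset_left y) :=
      LinearMap.congr_fun (hmackey σ μ τ hσ hμ hτ hστ hμτ) y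
    rw [m']
    exact LinearMap.congr_fun
      (hcov_comp (σ ∩ μ) μ τ (hsub σ hσ _ inter_subset_left) hμ hτ
        inter_subset_right hμτ) _
  -- key lemma: `sd j` pushes a generator of `L (j+1)` into `L j`
  have hB : ∀ (j : ℕ) (σ : Finset V) (hσ : σ ∈ K) (hss : σ ⊂ τ) (hc : σ.card ≤ j)
      (y : M σ), sd j (cov σ τ hσ hτ hss.subset y) ∈ L j := by
    intro j σ hσ hss hc y
    rw [hsd j]
    simp only [LinearMap.sub_apply, LinearMap.id_apply, LinearMap.sum_apply]
    have hsum : ∑ μ ∈ K.attach,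
        (if h : μ.1 ⊂ τ ∧ μ.1.card = j then
          (cov μ.1 τ μ.2 hτ h.1.subset).comp (con μ.1 τ μ.2 hτ h.1.subset)
        else 0) (cov σ τ hσ hτ hss.subset y)
        = ∑ μ ∈ K.attach,
          (if h : μ.1 ⊂ τ ∧ μ.1.card = j then
            cov (σ ∩ μ.1) τ (hsub σ hσ _ inter_subset_left) hτ
              (inter_subset_left.trans hss.subset)
              (con (σ ∩ μ.1) σ (hsub σ hσ _ inter_subset_left) hσ inter_subset_left y)
          else 0) := by
      refine Finset.sum_congr rfl fun μ _ => ?_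
      by_cases h : μ.1 ⊂ τ ∧ μ.1.card = j
      · rw [dif_pos h, dif_pos h, LinearMap.comp_apply]
        exact hred σ μ.1 hσ μ.2 hss.subset h.1.subset y
      · rw [dif_neg h, dif_neg h, LinearMap.zero_apply]
    rw [hsum]
    by_cases hcj : σ.card = j
    · have hmem : (⟨σ, hσ⟩ : {s : Finset V // s ∈ K}) ∈ K.attach := Finset.mem_attach _ _
      rw [← Finset.sum_erase_add K.attach _ hmem]
      have hg0 : (if h : (⟨σ, hσ⟩ : {s : Finset V // s ∈ K}).1 ⊂ τ ∧
            (⟨σ, hσ⟩ : {s : Finset V // s ∈ K}).1.card = j then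
          cov (σ ∩ (⟨σ, hσ⟩ : {s : Finset V // s ∈ K}).1) τ
            (hsub σ hσ _ inter_subset_left) hτ (inter_subset_left.trans hss.subset)
            (con (σ ∩ (⟨σ, hσ⟩ : {s : Finset V // s ∈ K}).1) σ
              (hsub σ hσ _ inter_subset_left) hσ inter_subset_left y)
        else 0) = cov σ τ hσ hτ hss.subset y := by
        rw [dif_pos ⟨hss, hcj⟩]
        exact hcc (σ ∩ σ) σ (hsub σ hσ _ inter_subset_left) hσ (Finset.inter_self σ)
          (inter_subset_left.trans hss.subset) hss.subset inter_subset_left y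
      rw [hg0]
      have heq2 : cov σ τ hσ hτ hss.subset y -
          ((∑ μ ∈ K.attach.erase ⟨σ, hσ⟩,
            (if h : μ.1 ⊂ τ ∧ μ.1.card = j then
              cov (σ ∩ μ.1) τ (hsub σ hσ _ inter_subset_left) hτ
                (inter_subset_left.trans hss.subset)
                (con (σ ∩ μ.1) σ (hsub σ hσ _ inter_subset_left) hσ inter_subset_left y)
            else 0)) + cov σ τ hσ hτ hss.subset y)
          = -(∑ μ ∈ K.attach.erase ⟨σ, hσ⟩,
            (if h : μ.1 ⊂ τ ∧ μ.1.card = j then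
              cov (σ ∩ μ.1) τ (hsub σ hσ _ inter_subset_left) hτ
                (inter_subset_left.trans hss.subset)
                (con (σ ∩ μ.1) σ (hsub σ hσ _ inter_subset_left) hσ inter_subset_left y)
            else 0)) := by abel
      rw [heq2]
      refine neg_mem (Submodule.sum_mem _ ?_)
      intro μ hμe
      by_cases hcond : μ.1 ⊂ τ ∧ μ.1.card = j
      · rw [dif_pos hcond]
        have hint : σ ∩ μ.1 ⊂ τ := lt_of_le_of_lt (le_iff_subset.mpr inter_subset_left) hss
        have hne : σ ∩ μ.1 ≠ σ := by
          intro hEq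
          have hsubμ : σ ⊆ μ.1 := Finset.inter_eq_left.mp hEq
          have : σ = μ.1 := Finset.eq_of_subset_of_card_le hsubμ (by omega)
          exact (Finset.ne_of_mem_erase hμe) (Subtype.ext this.symm)
        have hcard : (σ ∩ μ.1).card < j := by
          have : σ ∩ μ.1 ⊂ σ := lt_of_le_of_ne (le_iff_subset.mpr inter_subset_left) hne
          have := Finset.card_lt_card this
          omega
        exact hL_mem j (σ ∩ μ.1) (hsub σ hσ _ inter_subset_left) hint hcard _
      · rw [dif_neg hcond]; exact zero_mem _
    · have hlt : σ.card < j := lt_of_le_of_ne hc hcj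
      refine sub_mem (hL_mem j σ hσ hss hlt y) (Submodule.sum_mem _ ?_)
      intro μ _
      by_cases hcond : μ.1 ⊂ τ ∧ μ.1.card = j
      · rw [dif_pos hcond]
        have hint : σ ∩ μ.1 ⊂ τ := lt_of_le_of_lt (le_iff_subset.mpr inter_subset_left) hss
        have hcard : (σ ∩ μ.1).card < j :=
          lt_of_le_of_lt (Finset.card_le_card inter_subset_left) hlt
        exact hL_mem j (σ ∩ μ.1) (hsub σ hσ _ inter_subset_left) hint hcard _
      · rw [dif_neg hcond]; exact zero_mem _
  have hmapsto : ∀ (j : ℕ) (x : M τ), x ∈ L (j + 1) → sd j x ∈ L j := by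
    intro j x hx
    have hle : L (j + 1) ≤ Submodule.comap (sd j) (L j) := by
      refine iSup_le fun μ => iSup_le fun h1 => iSup_le fun h2 => ?_
      rintro z ⟨y, rfl⟩
      exact hB j μ.1 μ.2 h1 (Nat.lt_succ_iff.mp h2) y
    exact hle hx
  -- folding lemmas
  have hfold_comp : ∀ (l : List ℕ) (g : M τ →ₗ[Λ] M τ),
      l.foldr (fun i f => (sd i).comp f) g
        = (l.foldr (fun i f => (sd i).comp f) LinearMap.id).comp g := by
    intro l
    induction l with
    | nil => intro g; simp
    | cons a l ih =>
      intro g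
      simp only [List.foldr_cons, ih g, LinearMap.comp_assoc]
  have hvanish : ∀ (m : ℕ) (x : M τ), x ∈ L m →
      (List.range m).foldr (fun i f => (sd i).comp f) LinearMap.id x = 0 := by
    intro m
    induction m with
    | zero =>
      intro x hx
      simp [List.range_zero, hL0 x hx]
    | succ m ih =>
      intro x hx
      rw [List.range_succ, List.foldr_append, List.foldr_cons, List.foldr_nil,
        hfold_comp (List.range m)]
      simp only [LinearMap.comp_apply, LinearMap.id_apply]
      exact ih _ (hmapsto m x hx)
  have claim1 : ∀ x ∈ Ltau, stau x = 0 := by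
    intro x hx
    rw [hstau]
    exact hvanish τ.card x (hLtau_le x hx)
  -- second part : `stau x - x ∈ Ltau`
  have hsd_diff : ∀ (j : ℕ) (x : M τ), sd j x - x ∈ Ltau := by
    intro j x
    rw [hsd j]
    simp only [LinearMap.sub_apply, LinearMap.id_apply, LinearMap.sum_apply]
    have heq3 : x - (∑ μ ∈ K.attach,
        (if h : μ.1 ⊂ τ ∧ μ.1.card = j then
          (cov μ.1 τ μ.2 hτ h.1.subset).comp (con μ.1 τ μ.2 hτ h.1.subset)
        else 0) x) - x
        = -(∑ μ ∈ K.attach,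
          (if h : μ.1 ⊂ τ ∧ μ.1.card = j then
            (cov μ.1 τ μ.2 hτ h.1.subset).comp (con μ.1 τ μ.2 hτ h.1.subset)
          else 0) x) := by abel
    rw [heq3]
    refine neg_mem (Submodule.sum_mem _ ?_)
    intro μ _
    by_cases hcond : μ.1 ⊂ τ ∧ μ.1.card = j
    · rw [dif_pos hcond]
      rw [hLtau]
      refine Submodule.mem_iSup_of_mem μ ?_
      refine Submodule.mem_iSup_of_mem hcond.1 ?_
      exact ⟨con μ.1 τ μ.2 hτ hcond.1.subset x, rfl⟩
    · rw [dif_neg hcond, LinearMap.zero_apply]; exact zero_mem _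
  have hfold_diff : ∀ (l : List ℕ) (x : M τ),
      l.foldr (fun i f => (sd i).comp f) LinearMap.id x - x ∈ Ltau := by
    intro l
    induction l with
    | nil => intro x; simp
    | cons a l ih =>
      intro x
      rw [List.foldr_cons]
      simp only [LinearMap.comp_apply]
      set F := l.foldr (fun i f => (sd i).comp f) LinearMap.id with hF
      have heq4 : sd a (F x) - x = (sd a (F x) - F x) + (F x - x) := by abel
      rw [heq4]
      exact add_mem (hsd_diff a (F x)) (ih x)
  have claim2 : ∀ x : M τ, stau x - x ∈ Ltau := by
    intro x
    rw [hstau]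
    exact hfold_diff (List.range τ.card) x
  refine ⟨claim1, Ltau.liftQ stau (fun x hx => LinearMap.mem_ker.mpr (claim1 x hx)),
    fun x => Submodule.liftQ_apply _ _ _, ?_⟩
  refine LinearMap.ext fun q => ?_
  obtain ⟨x, rfl⟩ := Submodule.mkQ_surjective Ltau q
  simp only [LinearMap.comp_apply, LinearMap.id_apply, Submodule.mkQ_apply,
    Submodule.liftQ_apply]
  exact (Submodule.Quotient.eq Ltau).mpr (claim2 x)
end

section
/- Let Λ be a commutative ring, P the poset of simplices of a finite simplicial complex (including the empty simplex), and M = (M_*, M^*) a Mackey ΛP-module. Suppose given for each τ ∈ P a Λ-homomorphism ŝ_τ : S_τ M_* → M_*(τ) with p_τ ∘ ŝ_τ = id, where S_τ M_* = M_*(τ)/Σ_{σ<τ} im(M_*(σ ≤ τ)) and p_τ is the projection. Then the induced map of covariant ΛP-modules ⊕_{τ∈P} E_τ(S_τ M_*) → M_*, where E_τ(N) is the ΛP-module with value N at objects ? ≥ τ and 0 otherwise (with identity or inclusion structure maps), and whose component at τ is given by composing ŝ_τ with the structure maps of M_*, is an isomorphism. -/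
open Finset

/-- Let `P` be the simplex poset (empty simplex included) of a finite simplicial complex,
modelled as a subset-closed collection `K` of finite subsets of a finite vertex set `V`, and
`(M, cov, con)` a Mackey `ΛP`-module.  Suppose given for each `τ ∈ P` a `Λ`-homomorphism
`ŝ_τ : S_τ M → M τ` with `p_τ ∘ ŝ_τ = id`, where `S_τ M = M τ / Σ_{σ<τ} im(cov (σ ≤ τ))`
with projection `p_τ`.  Then the induced map of covariant `ΛP`-modules
`⊕_{τ∈P} E_τ(S_τ M) → M` is an isomorphism, i.e. at each object `σ ∈ P` the map
`⊕_{τ ≤ σ} S_τ M → M σ` whose `τ`-component is `cov (τ ≤ σ) ∘ ŝ_τ` (recall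
`E_τ(N)(σ) = N` for `τ ≤ σ` and `0` otherwise) is bijective. -/
theorem stmt11 {Λ V : Type} [CommRing Λ] [Fintype V] [DecidableEq V]
    (K : Finset (Finset V))
    (hsub : ∀ s ∈ K, ∀ t : Finset V, t ⊆ s → t ∈ K)
    (hempty : ∅ ∈ K)
    (M : Finset V → Type) [∀ s, AddCommGroup (M s)] [∀ s, Module Λ (M s)]
    (cov : ∀ σ τ : Finset V, σ ∈ K → τ ∈ K → σ ⊆ τ → (M σ →ₗ[Λ] M τ))
    (con : ∀ σ τ : Finset V, σ ∈ K → τ ∈ K → σ ⊆ τ → (M τ →ₗ[Λ] M σ))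
    (hcov_id : ∀ σ (h : σ ∈ K), cov σ σ h h (subset_refl σ) = LinearMap.id)
    (hcov_comp : ∀ σ τ ρ (hσ : σ ∈ K) (hτ : τ ∈ K) (hρ : ρ ∈ K)
      (h1 : σ ⊆ τ) (h2 : τ ⊆ ρ),
      (cov τ ρ hτ hρ h2).comp (cov σ τ hσ hτ h1) = cov σ ρ hσ hρ (h1.trans h2))
    (hcon_id : ∀ σ (h : σ ∈ K), con σ σ h h (subset_refl σ) = LinearMap.id)
    (hcon_comp : ∀ σ τ ρ (hσ : σ ∈ K) (hτ : τ ∈ K) (hρ : ρ ∈ K)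
      (h1 : σ ⊆ τ) (h2 : τ ⊆ ρ),
      (con σ τ hσ hτ h1).comp (con τ ρ hτ hρ h2) = con σ ρ hσ hρ (h1.trans h2))
    (hmackey : ∀ σ₁ σ₂ τ (h1 : σ₁ ∈ K) (h2 : σ₂ ∈ K) (hτ : τ ∈ K)
      (hs1 : σ₁ ⊆ τ) (hs2 : σ₂ ⊆ τ),
      (con σ₂ τ h2 hτ hs2).comp (cov σ₁ τ h1 hτ hs1)
        = (cov (σ₁ ∩ σ₂) σ₂ (hsub σ₂ h2 _ inter_subset_right) h2 inter_subset_right).comp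
            (con (σ₁ ∩ σ₂) σ₁ (hsub σ₁ h1 _ inter_subset_left) h1 inter_subset_left))
    -- the submodules `L_τ` with quotients `S_τ M = M τ / L_τ`:
    (Lt : ∀ τ : Finset V, τ ∈ K → Submodule Λ (M τ))
    (hLt : ∀ τ (hτ : τ ∈ K), Lt τ hτ = ⨆ (μ : {s : Finset V // s ∈ K}) (h : μ.1 ⊂ τ),
      LinearMap.range (cov μ.1 τ μ.2 hτ h.subset))
    -- the sections `ŝ_τ : S_τ M → M τ` of the projections `p_τ`:
    (shat : ∀ τ (hτ : τ ∈ K), (M τ ⧸ Lt τ hτ) →ₗ[Λ] M τ)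
    (hshat : ∀ τ (hτ : τ ∈ K), (Lt τ hτ).mkQ.comp (shat τ hτ) = LinearMap.id) :
    ∀ σ (hσ : σ ∈ K),
      Function.Bijective
        (DirectSum.toModule Λ {μ : Finset V // μ ∈ K ∧ μ ⊆ σ} (M σ)
          (fun i => (cov i.1 σ i.2.1 hσ i.2.2).comp (shat i.1 i.2.1))) := by

  classical
  -- notation for the comparison map at each object
  let Φ : ∀ σ (hσ : σ ∈ K),
      (DirectSum {μ : Finset V // μ ∈ K ∧ μ ⊆ σ} (fun i => M i.1 ⧸ Lt i.1 i.2.1)) →ₗ[Λ] M σ :=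
    fun σ hσ => DirectSum.toModule Λ {μ : Finset V // μ ∈ K ∧ μ ⊆ σ} (M σ)
      (fun i => (cov i.1 σ i.2.1 hσ i.2.2).comp (shat i.1 i.2.1))
  have hΦof : ∀ σ (hσ : σ ∈ K) (j : {μ : Finset V // μ ∈ K ∧ μ ⊆ σ})
      (z : M j.1 ⧸ Lt j.1 j.2.1),
      Φ σ hσ (DirectSum.of (fun i : {μ : Finset V // μ ∈ K ∧ μ ⊆ σ} => M i.1 ⧸ Lt i.1 i.2.1) j z)
        = cov j.1 σ j.2.1 hσ j.2.2 (shat j.1 j.2.1 z) := by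
    intro σ hσ j z
    rw [← DirectSum.lof_eq_of Λ, DirectSum.toModule_lof]
    rfl
  -- cov/con of an "equality" inclusion is the identity
  have hself : ∀ ρ τ (h : ρ = τ) (hρ : ρ ∈ K) (hτ : τ ∈ K) (h1 : ρ ⊆ τ) (h2 : ρ ⊆ τ)
      (v : M τ), cov ρ τ hρ hτ h1 (con ρ τ hρ hτ h2 v) = v := by
    rintro ρ τ rfl hρ hτ h1 h2 v
    have e1 : cov ρ ρ hρ hτ h1 = LinearMap.id := hcov_id ρ hρ
    have e2 : con ρ ρ hρ hτ h2 = LinearMap.id := hcon_id ρ hρ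
    rw [e1, e2]; rfl
  -- pushing forward the image of Φ along cov
  have hpush : ∀ σ (hσ : σ ∈ K) μ (hμ : μ ∈ K) (hms : μ ⊆ σ)
      (x : DirectSum {ν : Finset V // ν ∈ K ∧ ν ⊆ μ} (fun i => M i.1 ⧸ Lt i.1 i.2.1)),
      cov μ σ hμ hσ hms (Φ μ hμ x) ∈ LinearMap.range (Φ σ hσ) := by
    intro σ hσ μ hμ hms x
    induction x using DirectSum.induction_on with
    | zero => simp
    | of j z =>
        refine ⟨DirectSum.of (fun i : {ν : Finset V // ν ∈ K ∧ ν ⊆ σ} => M i.1 ⧸ Lt i.1 i.2.1)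
          ⟨j.1, j.2.1, j.2.2.trans hms⟩ z, ?_⟩
        rw [hΦof, hΦof]
        exact (LinearMap.congr_fun
          (hcov_comp j.1 μ σ j.2.1 hμ hσ j.2.2 hms) (shat j.1 j.2.1 z)).symm
    | add a b ha hb =>
        rw [map_add, map_add]
        exact Submodule.add_mem _ ha hb
  -- surjectivity, by strong induction on the simplex
  have hsurj : ∀ σ, ∀ hσ : σ ∈ K, Function.Surjective (Φ σ hσ) := by
    intro σ
    induction σ using Finset.strongInduction with
    | _ σ IH =>
      intro hσ m
      have h1 : shat σ hσ ((Lt σ hσ).mkQ m) ∈ LinearMap.range (Φ σ hσ) := by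
        refine ⟨DirectSum.of (fun i : {ν : Finset V // ν ∈ K ∧ ν ⊆ σ} => M i.1 ⧸ Lt i.1 i.2.1)
          ⟨σ, hσ, subset_refl σ⟩ ((Lt σ hσ).mkQ m), ?_⟩
        rw [hΦof]
        exact LinearMap.congr_fun (hcov_id σ hσ) _
      have h2 : m - shat σ hσ ((Lt σ hσ).mkQ m) ∈ Lt σ hσ := by
        have := LinearMap.congr_fun (hshat σ hσ) ((Lt σ hσ).mkQ m)
        simp only [LinearMap.comp_apply, LinearMap.id_apply] at this
        rw [← Submodule.Quotient.mk_eq_zero]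
        change (Lt σ hσ).mkQ _ = 0
        rw [map_sub, this, Submodule.mkQ_apply, sub_self]
      have h3 : Lt σ hσ ≤ LinearMap.range (Φ σ hσ) := by
        rw [hLt]
        refine iSup_le fun μ => iSup_le fun hlt => ?_
        rintro _ ⟨y, rfl⟩
        obtain ⟨x, rfl⟩ := IH μ.1 hlt μ.2 y
        exact hpush σ hσ μ.1 μ.2 hlt.subset x
      have := Submodule.add_mem _ (h3 h2) h1
      rw [sub_add_cancel] at this
      exact this
  -- injectivity, via the Mackey formula
  have hinj : ∀ σ, ∀ hσ : σ ∈ K, Function.Injective (Φ σ hσ) := by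
    intro σ hσ
    rw [injective_iff_map_eq_zero]
    intro x hx
    by_contra hne
    have hsupp : (DFinsupp.support x).Nonempty := by
      rw [Finset.nonempty_iff_ne_empty, Ne, DFinsupp.support_eq_empty]
      exact hne
    obtain ⟨i₀, hi₀, hmax⟩ :=
      Finset.exists_max_image (DFinsupp.support x) (fun j => j.1.card) hsupp
    set f : M σ →ₗ[Λ] (M i₀.1 ⧸ Lt i₀.1 i₀.2.1) :=
      (Lt i₀.1 i₀.2.1).mkQ.comp (con i₀.1 σ i₀.2.1 hσ i₀.2.2) with hf
    have key : f (Φ σ hσ x) = x i₀ := by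
      conv_lhs => rw [← DirectSum.sum_support_of x]
      rw [map_sum, map_sum]
      rw [Finset.sum_eq_single i₀]
      · -- diagonal term
        rw [hΦof, hf]
        simp only [LinearMap.comp_apply, Submodule.mkQ_apply]
        have hm := LinearMap.congr_fun
          (hmackey i₀.1 i₀.1 σ i₀.2.1 i₀.2.1 hσ i₀.2.2 i₀.2.2) (shat i₀.1 i₀.2.1 (x i₀))
        simp only [LinearMap.comp_apply] at hm
        rw [hm, hself _ _ (Finset.inter_self i₀.1) _ _ _ _]
        have := LinearMap.congr_fun (hshat i₀.1 i₀.2.1) (x i₀)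
        simpa using this
      · -- off-diagonal terms vanish
        intro j hj hjne
        rw [hΦof, hf]
        simp only [LinearMap.comp_apply, Submodule.mkQ_apply]
        have hm := LinearMap.congr_fun
          (hmackey j.1 i₀.1 σ j.2.1 i₀.2.1 hσ j.2.2 i₀.2.2) (shat j.1 j.2.1 (x j))
        simp only [LinearMap.comp_apply] at hm
        rw [hm]
        have hstrict : j.1 ∩ i₀.1 ⊂ i₀.1 := by
          refine Finset.ssubset_iff_subset_ne.2 ⟨inter_subset_right, ?_⟩
          intro hEq
          have hi_sub : i₀.1 ⊆ j.1 := by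
            intro a ha
            have : a ∈ j.1 ∩ i₀.1 := by rw [hEq]; exact ha
            exact (Finset.mem_inter.1 this).1
          have hcard : j.1.card ≤ i₀.1.card := hmax j hj
          have : i₀.1 = j.1 := Finset.eq_of_subset_of_card_le hi_sub hcard
          exact hjne (Subtype.ext this.symm)
        rw [Submodule.Quotient.mk_eq_zero]
        rw [hLt]
        exact Submodule.mem_iSup_of_mem ⟨j.1 ∩ i₀.1, hsub i₀.1 i₀.2.1 _ inter_subset_right⟩
          (Submodule.mem_iSup_of_mem hstrict ⟨_, rfl⟩)
      · intro hni
        rw [DFinsupp.notMem_support_iff.1 hni]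
        simp
    rw [hx, map_zero] at key
    exact (DFinsupp.mem_support_iff.1 hi₀) key.symm
  intro σ hσ
  exact ⟨hinj σ hσ, hsurj σ hσ⟩
end

section
/- Define u_n for n ≥ 2 by u_n = 4(ρ_{n,0}+ρ_{n−1,0}) + 5(ρ_{n,1}+ρ_{n−1,1}) + 2(ρ_{n,2}+ρ_{n−1,2}). Then u_{2k} = 4k² + 4k + 1 for k ≥ 1 and u_{2k+1} = 4k² + 8k + 4 for k ≥ 1. -/
/-- `u_n = 4(ρ_{n,0}+ρ_{n−1,0}) + 5(ρ_{n,1}+ρ_{n−1,1}) + 2(ρ_{n,2}+ρ_{n−1,2})`. -/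
def u (n : ℕ) : ℤ :=
  4 * (rho n 0 + rho (n - 1) 0) + 5 * (rho n 1 + rho (n - 1) 1)
    + 2 * (rho n 2 + rho (n - 1) 2)

lemma rho_add (n k : ℕ) : rho (n + 1) k + rho n k = (n.choose k : ℤ) := by
  rcases le_or_gt k n with h | h
  · unfold rho
    rw [Finset.sum_Ico_succ_top h]
    have hc : ∀ j ∈ Finset.Ico k n,
        (-1 : ℤ) ^ (n + 1 - 1 - j) * (j.choose k : ℤ)
          = -((-1 : ℤ) ^ (n - 1 - j) * (j.choose k : ℤ)) := by
      intro j hj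
      have hj' : j < n := (Finset.mem_Ico.mp hj).2
      have he : n + 1 - 1 - j = (n - 1 - j) + 1 := by omega
      rw [he, pow_succ]; ring
    rw [Finset.sum_congr rfl hc, Finset.sum_neg_distrib]
    have : n + 1 - 1 - n = 0 := by omega
    rw [this]
    ring
  · have h1 : Finset.Ico k (n + 1) = ∅ := by
      rw [Finset.Ico_eq_empty_iff]; omega
    have h2 : Finset.Ico k n = ∅ := by
      rw [Finset.Ico_eq_empty_iff]; omega
    have h3 : n.choose k = 0 := Nat.choose_eq_zero_of_lt h
    simp [rho, h1, h2, h3]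

lemma choose_two (m : ℕ) : 2 * (m.choose 2 : ℤ) = m * ((m : ℤ) - 1) := by
  induction m with
  | zero => simp
  | succ n ih =>
    rw [Nat.choose_succ_succ, Nat.choose_one_right]
    push_cast
    linear_combination ih

lemma u_succ (m : ℕ) : u (m + 1) = ((m : ℤ) + 2) ^ 2 := by
  unfold u
  simp only [Nat.add_sub_cancel]
  rw [rho_add, rho_add, rho_add]
  have h2 := choose_two m
  simp only [Nat.choose_zero_right, Nat.choose_one_right]
  push_cast
  linear_combination h2

theorem stmt14 (k : ℕ) (hk : 1 ≤ k) :
    u (2 * k) = 4 * (k : ℤ) ^ 2 + 4 * k + 1 ∧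
    u (2 * k + 1) = 4 * (k : ℤ) ^ 2 + 8 * k + 4 := by
  constructor
  · have h : 2 * k = (2 * k - 1) + 1 := by omega
    rw [h, u_succ]
    have hc : ((2 * k - 1 : ℕ) : ℤ) = 2 * (k : ℤ) - 1 := by omega
    rw [hc]; ring
  · rw [u_succ]; push_cast; ring
end

section
/- Let K_* be a generalized homology theory with values in Λ-modules and let T^k = (S¹)^k be the k-torus. For 1 ≤ i ≤ k let T^k_i ⊆ T^k be the subspace of points whose i-th coordinate is the basepoint, with inclusion j^k_i. Then for every n there is an isomorphism of Λ-modules coker(⊕_{i=1}^k K_n(j^k_i) : ⊕_{i=1}^k K_n(T^k_i) → K_n(T^k)) ≅ K_{n−k}(pt). -/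
/-!
Induct on `k` through `T^{k+1} ≅ T^k × S¹`, splitting off the last coordinate: the subspaces
`T^{k+1}_i` become `T^k_i × S¹` for `i ≤ k` and the slice `T^k × {1}` for `i = k + 1`.
For any space `X` with maps `A_i → X`, the splitting `K_n(X × S¹) ≅ K_n(X) ⊕ K_{n-1}(X)` carries
the image of `K_n(A_i × S¹)` to `im K_n(A_i) × im K_{n-1}(A_i)` and the image of `K_n(X × {1})`
to the graph of some `σ : K_n(X) → K_{n-1}(X)`, which maps `im K_n(A_i)` into `im K_{n-1}(A_i)`
by naturality. So `(a, b) ↦ b - σ a` identifies the quotient of `K_n(X × S¹)` by all these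
images with `K_{n-1}(X)` modulo the images of the `K_{n-1}(A_i)`. Hence the cokernel for `T^k` in
degree `n` is the cokernel for `T^0 = pt` in degree `n - k`, where nothing is divided out.
-/

open CategoryTheory

/-- The `k`-torus `T^k = (S¹)^k` as a topological space. -/
noncomputable def Torus (k : ℕ) : TopCat.{0} := TopCat.of (Fin k → Circle)

/-- The subspace `T^k_i ⊆ T^k` of points whose `i`-th coordinate is the basepoint `1 ∈ S¹`. -/
noncomputable def TorusSub (k : ℕ) (i : Fin k) : TopCat.{0} :=
  TopCat.of {x : Fin k → Circle // x i = 1}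

/-- The inclusion `j^k_i : T^k_i → T^k`. -/
noncomputable def torusIncl (k : ℕ) (i : Fin k) : TorusSub k i ⟶ Torus k :=
  TopCat.ofHom (ContinuousMap.mk (fun x : {x : Fin k → Circle // x i = 1} => x.1) continuous_subtype_val)

/-- For `X` a space, the projection `X × S¹ → X`. -/
noncomputable def prFst (X : TopCat.{0}) : TopCat.of (X × Circle) ⟶ X :=
  TopCat.ofHom (ContinuousMap.fst : C(X × Circle, X))

/-- For `f : X → Y`, the map `f × id : X × S¹ → Y × S¹`. -/
noncomputable def prodS1Map {X Y : TopCat.{0}} (f : X ⟶ Y) :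
    TopCat.of (X × Circle) ⟶ TopCat.of (Y × Circle) :=
  TopCat.ofHom (ContinuousMap.prodMap f.hom (ContinuousMap.id Circle))

theorem iSup_fin_succ_eq_last_sup {α : Type*} [CompleteLattice α] {n : ℕ} (f : Fin (n + 1) → α) :
    ⨆ i, f i = f (Fin.last n) ⊔ ⨆ i : Fin n, f i.castSucc := by
  rw [← finSuccEquivLast.symm.iSup_comp, iSup_option, finSuccEquivLast_symm_none]
  simp only [finSuccEquivLast_symm_some]

section

variable {R M N : Type*} [Ring R] [AddCommGroup M] [Module R M] [AddCommGroup N] [Module R N]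

theorem LinearMap.mem_graph_sup_bot_prod_iff (σ : M →ₗ[R] N) (U : Submodule R N) (x : M × N) :
    x ∈ σ.graph ⊔ (⊥ : Submodule R M).prod U ↔ x.2 - σ x.1 ∈ U := by
  constructor
  · intro hx
    obtain ⟨y, hy, z, hz, rfl⟩ := Submodule.mem_sup.1 hx
    rw [LinearMap.mem_graph_iff] at hy
    rw [Submodule.mem_prod, Submodule.mem_bot] at hz
    simpa [hy, hz.1] using hz.2
  · intro hx
    have hdecomp : x = (x.1, σ x.1) + (0, x.2 - σ x.1) := by ext <;> simp
    rw [hdecomp]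
    exact Submodule.add_mem_sup (by simp [LinearMap.mem_graph_iff]) ⟨Submodule.zero_mem _, hx⟩

theorem LinearMap.graph_sup_iSup_prod {ι : Sort*} (σ : M →ₗ[R] N) (P : ι → Submodule R M)
    (U : ι → Submodule R N) (hσ : ∀ i, (P i).map σ ≤ U i) :
    σ.graph ⊔ ⨆ i, (P i).prod (U i) = σ.graph ⊔ (⊥ : Submodule R M).prod (⨆ i, U i) := by
  refine le_antisymm (sup_le le_sup_left (iSup_le fun i x hx => ?_)) (sup_le_sup_left ?_ _)
  · rw [LinearMap.mem_graph_sup_bot_prod_iff]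
    exact Submodule.sub_mem _ (le_iSup U i hx.2) (le_iSup U i (hσ i ⟨x.1, hx.1, rfl⟩))
  · rw [← Submodule.map_inr, Submodule.map_iSup]
    exact iSup_mono fun i => (Submodule.map_inr _).trans_le (Submodule.prod_mono bot_le le_rfl)

noncomputable def LinearMap.quotGraphSupEquiv (σ : M →ₗ[R] N) (U : Submodule R N) :
    ((M × N) ⧸ σ.graph ⊔ (⊥ : Submodule R M).prod U) ≃ₗ[R] N ⧸ U :=
  let ψ : M × N →ₗ[R] N ⧸ U := U.mkQ ∘ₗ (LinearMap.snd R M N - σ ∘ₗ LinearMap.fst R M N)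
  have hψ : Function.Surjective ψ := fun y => by
    obtain ⟨y, rfl⟩ := U.mkQ_surjective y
    exact ⟨(0, y), by simp [ψ]⟩
  have hker : σ.graph ⊔ (⊥ : Submodule R M).prod U = LinearMap.ker ψ := by
    ext x
    rw [LinearMap.mem_graph_sup_bot_prod_iff, LinearMap.mem_ker, ← Submodule.Quotient.mk_eq_zero]
    rfl
  (Submodule.quotEquivOfEq _ _ hker).trans (ψ.quotKerEquivOfSurjective hψ)

end

noncomputable def inclAtOne (X : TopCat.{0}) : X ⟶ TopCat.of (X × Circle) :=
  TopCat.ofHom ⟨fun x => (x, 1), by fun_prop⟩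

theorem inclAtOne_comp_prFst (X : TopCat.{0}) : inclAtOne X ≫ prFst X = 𝟙 X := rfl

theorem inclAtOne_comp_prodS1Map {X Y : TopCat.{0}} (f : X ⟶ Y) :
    inclAtOne X ≫ prodS1Map f = f ≫ inclAtOne Y := rfl

structure CircleSplitHomology (Λ : Type) [Ring Λ] where
  K : ℤ → TopCat.{0} → Type
  [addCommGroup : ∀ n X, AddCommGroup (K n X)]
  [module : ∀ n X, Module Λ (K n X)]
  map : ∀ (n : ℤ) ⦃X Y : TopCat.{0}⦄, (X ⟶ Y) → (K n X →ₗ[Λ] K n Y)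
  map_id : ∀ (n : ℤ) (X : TopCat.{0}), map n (𝟙 X) = LinearMap.id
  map_comp : ∀ (n : ℤ) ⦃X Y Z : TopCat.{0}⦄ (f : X ⟶ Y) (g : Y ⟶ Z),
    map n (f ≫ g) = (map n g).comp (map n f)
  split : ∀ (n : ℤ) (X : TopCat.{0}), K n (TopCat.of (X × Circle)) ≃ₗ[Λ] K n X × K (n - 1) X
  split_map_prodS1Map : ∀ (n : ℤ) ⦃X Y : TopCat.{0}⦄ (f : X ⟶ Y) (x : K n (TopCat.of (X × Circle))),
    split n Y (map n (prodS1Map f) x) = (map n f (split n X x).1, map (n - 1) f (split n X x).2)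
  split_fst : ∀ (n : ℤ) (X : TopCat.{0}) (x : K n (TopCat.of (X × Circle))),
    (split n X x).1 = map n (prFst X) x

namespace CircleSplitHomology

attribute [instance] addCommGroup module

variable {Λ : Type} [Ring Λ] (h : CircleSplitHomology Λ)

theorem map_map (n : ℤ) {X Y Z : TopCat.{0}} (f : X ⟶ Y) (g : Y ⟶ Z) (x : h.K n X) :
    h.map n g (h.map n f x) = h.map n (f ≫ g) x := by
  rw [h.map_comp]; rfl

noncomputable def mapIso (n : ℤ) {X Y : TopCat.{0}} (e : X ≅ Y) : h.K n X ≃ₗ[Λ] h.K n Y :=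
  LinearEquiv.ofLinearMap (h.map n e.hom) (h.map n e.inv)
    (by rw [← h.map_comp, e.inv_hom_id, h.map_id]) (by rw [← h.map_comp, e.hom_inv_id, h.map_id])

theorem range_map_iso_comp (n : ℤ) {X Y Z : TopCat.{0}} (e : X ≅ Y) (g : Y ⟶ Z) :
    LinearMap.range (h.map n (e.hom ≫ g)) = LinearMap.range (h.map n g) := by
  rw [h.map_comp]
  exact LinearMap.range_comp_of_range_eq_top _ (h.mapIso n e).range

/-- The splitting need not carry the slice `X × {1}` into the summand `K_n(X)`; this is the
component it has in `K_{n-1}(X)`. -/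
noncomputable def sndAtOne (n : ℤ) (X : TopCat.{0}) : h.K n X →ₗ[Λ] h.K (n - 1) X :=
  LinearMap.snd Λ _ _ ∘ₗ (h.split n X).toLinearMap ∘ₗ h.map n (inclAtOne X)

theorem split_map_inclAtOne (n : ℤ) (X : TopCat.{0}) (a : h.K n X) :
    h.split n X (h.map n (inclAtOne X) a) = (a, h.sndAtOne n X a) := by
  refine Prod.ext ?_ rfl
  rw [h.split_fst, h.map_map, inclAtOne_comp_prFst, h.map_id]
  rfl

theorem sndAtOne_map (n : ℤ) {X Y : TopCat.{0}} (f : X ⟶ Y) (a : h.K n X) :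
    h.sndAtOne n Y (h.map n f a) = h.map (n - 1) f (h.sndAtOne n X a) := by
  change (h.split n Y _).2 = _
  rw [h.map_map, ← inclAtOne_comp_prodS1Map, ← h.map_map, h.split_map_prodS1Map]
  rfl

theorem map_range_map_inclAtOne (n : ℤ) (X : TopCat.{0}) :
    (LinearMap.range (h.map n (inclAtOne X))).map (h.split n X).toLinearMap
      = (h.sndAtOne n X).graph := by
  rw [LinearMap.graph_eq_range_prod, ← LinearMap.range_comp]
  congr 1
  ext a <;> simp [h.split_map_inclAtOne]

theorem map_range_map_prodS1Map (n : ℤ) {X Y : TopCat.{0}} (f : X ⟶ Y) :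
    (LinearMap.range (h.map n (prodS1Map f))).map (h.split n Y).toLinearMap
      = (LinearMap.range (h.map n f)).prod (LinearMap.range (h.map (n - 1) f)) := by
  have hcomm : (h.split n Y).toLinearMap ∘ₗ h.map n (prodS1Map f)
      = (h.map n f).prodMap (h.map (n - 1) f) ∘ₗ (h.split n X).toLinearMap := by
    ext x : 1
    exact h.split_map_prodS1Map n f x
  rw [← LinearMap.range_comp, hcomm, LinearMap.range_comp_of_range_eq_top _ (h.split n X).range,
    LinearMap.range_prodMap]

theorem map_split_sup_iSup_range (n : ℤ) {ι : Sort*} {A : ι → TopCat.{0}} {X : TopCat.{0}}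
    (f : ∀ i, A i ⟶ X) :
    (LinearMap.range (h.map n (inclAtOne X))
        ⊔ ⨆ i, LinearMap.range (h.map n (prodS1Map (f i)))).map (h.split n X).toLinearMap
      = (h.sndAtOne n X).graph
          ⊔ (⊥ : Submodule Λ (h.K n X)).prod (⨆ i, LinearMap.range (h.map (n - 1) (f i))) := by
  rw [Submodule.map_sup, Submodule.map_iSup, h.map_range_map_inclAtOne]
  simp only [h.map_range_map_prodS1Map]
  refine (h.sndAtOne n X).graph_sup_iSup_prod _ _ fun i => ?_
  rintro _ ⟨_, ⟨a, rfl⟩, rfl⟩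
  exact ⟨_, (h.sndAtOne_map n (f i) a).symm⟩

noncomputable def quotProdCircleEquiv (n : ℤ) {ι : Sort*} {A : ι → TopCat.{0}} {X : TopCat.{0}}
    (f : ∀ i, A i ⟶ X) :
    (h.K n (TopCat.of (X × Circle)) ⧸
        LinearMap.range (h.map n (inclAtOne X)) ⊔ ⨆ i, LinearMap.range (h.map n (prodS1Map (f i))))
      ≃ₗ[Λ] h.K (n - 1) X ⧸ ⨆ i, LinearMap.range (h.map (n - 1) (f i)) :=
  (Submodule.Quotient.equiv _ _ (h.split n X) (h.map_split_sup_iSup_range n f)).trans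
    ((h.sndAtOne n X).quotGraphSupEquiv _)

end CircleSplitHomology

noncomputable def Fin.initLastHomeomorph (X : Type*) [TopologicalSpace X] (k : ℕ) :
    (Fin (k + 1) → X) ≃ₜ (Fin k → X) × X where
  toFun x := (Fin.init x, x (Fin.last k))
  invFun p := Fin.snoc p.1 p.2
  left_inv := Fin.snoc_init_self
  right_inv p := by simp
  continuous_toFun := by fun_prop
  continuous_invFun := by fun_prop

noncomputable def torusSuccIso (k : ℕ) : Torus (k + 1) ≅ TopCat.of (Torus k × Circle) :=
  TopCat.isoOfHomeo (Fin.initLastHomeomorph Circle k)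

noncomputable def torusSubCastSuccIso (k : ℕ) (i : Fin k) :
    TorusSub (k + 1) i.castSucc ≅ TopCat.of (TorusSub k i × Circle) :=
  TopCat.isoOfHomeo
    (X := TopCat.of {x : Fin (k + 1) → Circle // x i.castSucc = 1})
    (Y := TopCat.of ({x : Fin k → Circle // x i = 1} × Circle))
    { toFun x := (⟨Fin.init x.1, x.2⟩, x.1 (Fin.last k))
      invFun p := ⟨Fin.snoc p.1.1 p.2, by simpa using p.1.2⟩
      left_inv x := Subtype.ext (Fin.snoc_init_self x.1)
      right_inv p := by simp
      continuous_toFun := (continuous_subtype_val.finInit.subtype_mk _).prodMk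
        ((continuous_apply _).comp continuous_subtype_val)
      continuous_invFun := by fun_prop }

noncomputable def torusSubLastIso (k : ℕ) : TorusSub (k + 1) (Fin.last k) ≅ Torus k :=
  TopCat.isoOfHomeo
    (X := TopCat.of {x : Fin (k + 1) → Circle // x (Fin.last k) = 1})
    (Y := TopCat.of (Fin k → Circle))
    { toFun x := Fin.init x.1
      invFun y := ⟨Fin.snoc y 1, Fin.snoc_last _ _⟩
      left_inv x := Subtype.ext (by simpa [x.2] using Fin.snoc_init_self x.1)
      right_inv y := by simp
      continuous_toFun := by fun_prop
      continuous_invFun := by fun_prop }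

noncomputable def torusZeroIso : Torus 0 ≅ TopCat.of PUnit :=
  TopCat.isoOfHomeo (X := TopCat.of (Fin 0 → Circle)) (Homeomorph.homeomorphOfUnique _ _)

theorem torusIncl_castSucc_comp_torusSuccIso (k : ℕ) (i : Fin k) :
    torusIncl (k + 1) i.castSucc ≫ (torusSuccIso k).hom
      = (torusSubCastSuccIso k i).hom ≫ prodS1Map (torusIncl k i) := rfl

theorem torusIncl_last_comp_torusSuccIso (k : ℕ) :
    torusIncl (k + 1) (Fin.last k) ≫ (torusSuccIso k).hom
      = (torusSubLastIso k).hom ≫ inclAtOne (Torus k) := by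
  ext1 x
  exact Prod.ext rfl x.2

namespace CircleSplitHomology

variable {Λ : Type} [Ring Λ] (h : CircleSplitHomology Λ)

theorem map_iSup_range_map_torusIncl_succ (n : ℤ) (k : ℕ) :
    (⨆ i, LinearMap.range (h.map n (torusIncl (k + 1) i))).map
        (h.mapIso n (torusSuccIso k)).toLinearMap
      = LinearMap.range (h.map n (inclAtOne (Torus k)))
          ⊔ ⨆ i, LinearMap.range (h.map n (prodS1Map (torusIncl k i))) := by
  have hmap_range : ∀ {X : TopCat.{0}} (f : X ⟶ Torus (k + 1)),
      (LinearMap.range (h.map n f)).map (h.mapIso n (torusSuccIso k)).toLinearMap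
        = LinearMap.range (h.map n (f ≫ (torusSuccIso k).hom)) := fun f => by
    rw [h.map_comp, LinearMap.range_comp]
    rfl
  simp only [iSup_fin_succ_eq_last_sup, Submodule.map_sup, Submodule.map_iSup, hmap_range,
    torusIncl_last_comp_torusSuccIso, torusIncl_castSucc_comp_torusSuccIso, range_map_iso_comp]

noncomputable def torusQuotSuccEquiv (n : ℤ) (k : ℕ) :
    (h.K n (Torus (k + 1)) ⧸ ⨆ i, LinearMap.range (h.map n (torusIncl (k + 1) i)))
      ≃ₗ[Λ] h.K (n - 1) (Torus k) ⧸ ⨆ i, LinearMap.range (h.map (n - 1) (torusIncl k i)) :=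
  (Submodule.Quotient.equiv _ _ (h.mapIso n (torusSuccIso k))
      (h.map_iSup_range_map_torusIncl_succ n k)).trans
    (h.quotProdCircleEquiv n (torusIncl k))

theorem nonempty_torusQuot_equiv (n : ℤ) (k : ℕ) :
    Nonempty ((h.K n (Torus k) ⧸ ⨆ i, LinearMap.range (h.map n (torusIncl k i)))
      ≃ₗ[Λ] h.K (n - k) (TopCat.of PUnit)) := by
  induction k generalizing n with
  | zero =>
    rw [iSup_of_empty, Nat.cast_zero, sub_zero]
    exact ⟨(Submodule.quotEquivOfEqBot _ rfl).trans (h.mapIso n torusZeroIso)⟩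
  | succ k ih =>
    obtain ⟨e⟩ := ih (n - 1)
    rw [Nat.cast_succ, sub_add_eq_sub_sub_swap]
    exact ⟨(h.torusQuotSuccEquiv n k).trans e⟩

end CircleSplitHomology

/-- Let `K_*` be a generalized homology theory with values in `Λ`-modules, encoded by its
underlying functors `Kb n : TopCat → Λ-Mod` (`n ∈ ℤ`) together with the natural splittings
`B n X : K_n(X × S¹) ≅ K_n(X) ⊕ K_{n−1}(X)` provided by the suspension isomorphism, the
first component of `B` being induced by the projection `X × S¹ → X`.  Then for every `n`
there is an isomorphism of `Λ`-modules
`coker(⊕_{i=1}^k K_n(j^k_i) : ⊕_i K_n(T^k_i) → K_n(T^k)) ≅ K_{n−k}(pt)`. -/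
theorem stmt17 {Λ : Type} [CommRing Λ]
    (Kb : ℤ → TopCat.{0} → Type)
    [∀ n X, AddCommGroup (Kb n X)] [∀ n X, Module Λ (Kb n X)]
    (Kmap : ∀ (n : ℤ) ⦃X Y : TopCat.{0}⦄, (X ⟶ Y) → (Kb n X →ₗ[Λ] Kb n Y))
    (hKid : ∀ (n : ℤ) (X : TopCat.{0}), Kmap n (𝟙 X) = LinearMap.id)
    (hKcomp : ∀ (n : ℤ) ⦃X Y Z : TopCat.{0}⦄ (f : X ⟶ Y) (g : Y ⟶ Z),
      Kmap n (f ≫ g) = (Kmap n g).comp (Kmap n f))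
    (B : ∀ (n : ℤ) (X : TopCat.{0}),
      Kb n (TopCat.of (X × Circle)) ≃ₗ[Λ] Kb n X × Kb (n - 1) X)
    (hBnat : ∀ (n : ℤ) ⦃X Y : TopCat.{0}⦄ (f : X ⟶ Y)
      (x : Kb n (TopCat.of (X × Circle))),
      B n Y (Kmap n (prodS1Map f) x)
        = (Kmap n f (B n X x).1, Kmap (n - 1) f (B n X x).2))
    (hBfst : ∀ (n : ℤ) (X : TopCat.{0}) (x : Kb n (TopCat.of (X × Circle))),
      (B n X x).1 = Kmap n (prFst X) x)
    (n : ℤ) (k : ℕ) :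
    Nonempty
      ((Kb n (Torus k) ⧸
          ⨆ i : Fin k, LinearMap.range (Kmap n (torusIncl k i)))
        ≃ₗ[Λ] Kb (n - k) (TopCat.of PUnit)) :=
  CircleSplitHomology.nonempty_torusQuot_equiv ⟨Kb, Kmap, hKid, hKcomp, B, hBnat, hBfst⟩ n k
end
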